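/- (Proposition 2, robust MD-CRT for special moduli, sufficiency.) Let M ∈ ℤ^{D×D} be nonsingular and let Γ₁,…,Γ_L ∈ ℤ^{D×D} (L ≥ 2) be nonsingular, pairwise commutative (Γ_iΓ_j = Γ_jΓ_i) and pairwise coprime (a gcld of Γ_i and Γ_j is unimodular for i ≠ j). Set M_i = MΓ_i for 1 ≤ i ≤ L. Fix a unimodular matrix U₁ and suppose m ∈ ℤ^D satisfies ⌊M₁⁻¹m⌋ ∈ N(Γ₂Γ₃⋯Γ_L U₁). Let n_i = ⌊M_i⁻¹m⌋, r_i = m − M_i n_i, and let erroneous remainders r̃_i = r_i + Δr_i satisfy ‖Δr_i‖₂ ≤ τ for 1 ≤ i ≤ L, where τ < λ(M)/4. Then: (a) for each 2 ≤ i ≤ L, r_i − r₁ is the unique minimizer of ‖v − (r̃_i − r̃₁)‖₂ over v ∈ L(M); (b) n₁ is the unique vector ν ∈ N(Γ₂Γ₃⋯Γ_L U₁) satisfying MΓ₁ν − (r_i − r₁) ∈ L(MΓ_i) for all 2 ≤ i ≤ L, and M_i n_i = MΓ₁n₁ − (r_i − r₁) for 2 ≤ i ≤ L; (c) the reconstruction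 m̃ = (1/L)∑_{i=1}^L (M_i n_i + r̃_i) satisfies ‖m̃ − m‖₂ ≤ τ. -/

import Mathlib

open Matrix

noncomputable section

/-- Real cast of an integer matrix. -/
def rmat {D : ℕ} (A : Matrix (Fin D) (Fin D) ℤ) : Matrix (Fin D) (Fin D) ℝ :=
  A.map Int.cast

/-- Real cast of an integer vector, viewed in Euclidean space. -/
def rvec {D : ℕ} (v : Fin D → ℤ) : EuclideanSpace ℝ (Fin D) :=
  WithLp.toLp 2 fun i => (v i : ℝ)

/-- The lattice generated by a real matrix. -/
def latt {D : ℕ} (A : Matrix (Fin D) (Fin D) ℝ) : Set (EuclideanSpace ℝ (Fin D)) :=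
  {v | ∃ n : Fin D → ℤ, v = A.mulVec fun i => (n i : ℝ)}

/-- Minimum (Euclidean) distance of the lattice generated by a real matrix. -/
def lamMin {D : ℕ} (A : Matrix (Fin D) (Fin D) ℝ) : ℝ :=
  sInf {r | ∃ v ∈ latt A, v ≠ 0 ∧ ‖v‖ = r}

/-- The set of integer vectors of the lattice generated by an integer matrix. -/
def lattZ {D : ℕ} (A : Matrix (Fin D) (Fin D) ℤ) : Set (Fin D → ℤ) :=
  {v | ∃ n : Fin D → ℤ, v = A.mulVec n}

/-- N(A): the integer points in the fundamental parallelepiped of a real matrix A. -/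
def NN {D : ℕ} (A : Matrix (Fin D) (Fin D) ℝ) : Set (Fin D → ℤ) :=
  {k | ∃ x : Fin D → ℝ, (∀ i, 0 ≤ x i ∧ x i < 1) ∧ (fun i => (k i : ℝ)) = A.mulVec x}

/-- A is a left divisor of B (i.e. A⁻¹B is an integer matrix). -/
def LeftDvd {D : ℕ} (A B : Matrix (Fin D) (Fin D) ℤ) : Prop :=
  ∃ C : Matrix (Fin D) (Fin D) ℤ, B = A * C

/-- G is a greatest common left divisor of A and B. -/
def IsGcld {D : ℕ} (G A B : Matrix (Fin D) (Fin D) ℤ) : Prop :=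
  G.det ≠ 0 ∧ LeftDvd G A ∧ LeftDvd G B ∧
    ∀ C : Matrix (Fin D) (Fin D) ℤ, C.det ≠ 0 → LeftDvd C A → LeftDvd C B → LeftDvd C G

/-- R is a (nonsingular) right multiple of B. -/
def RightMulOf {D : ℕ} (R B : Matrix (Fin D) (Fin D) ℤ) : Prop :=
  ∃ P : Matrix (Fin D) (Fin D) ℤ, P.det ≠ 0 ∧ R = B * P

/-- R is a least common right multiple of the family M. -/
def IsLcrm {D : ℕ} {ι : Type*} (R : Matrix (Fin D) (Fin D) ℤ)
    (M : ι → Matrix (Fin D) (Fin D) ℤ) : Prop :=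
  R.det ≠ 0 ∧ (∀ i, RightMulOf R (M i)) ∧
    ∀ R' : Matrix (Fin D) (Fin D) ℤ, R'.det ≠ 0 → (∀ i, RightMulOf R' (M i)) →
      RightMulOf R' R

/-- Folding vector ⌊A⁻¹ m⌋ (element-wise floor). -/
def fold {D : ℕ} (A : Matrix (Fin D) (Fin D) ℤ) (m : Fin D → ℤ) : Fin D → ℤ :=
  fun i => ⌊((rmat A)⁻¹.mulVec fun j => (m j : ℝ)) i⌋


/-! ### Auxiliary lemmas -/

lemma rvec_sub {D : ℕ} (a b : Fin D → ℤ) : rvec (a - b) = rvec a - rvec b := by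
  ext i; simp [rvec]

lemma rvec_add {D : ℕ} (a b : Fin D → ℤ) : rvec (a + b) = rvec a + rvec b := by
  ext i; simp [rvec]

lemma rvec_mulVec {D : ℕ} (A : Matrix (Fin D) (Fin D) ℤ) (v : Fin D → ℤ) :
    rvec (A.mulVec v) = (rmat A).mulVec (rvec v) := by
  funext i
  simp [rvec, rmat, Matrix.mulVec, dotProduct]

lemma mulVec_int_injective {D : ℕ} {A : Matrix (Fin D) (Fin D) ℤ} (hA : A.det ≠ 0) :
    Function.Injective A.mulVec := by
  intro x y h
  by_contra hne
  apply hA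
  rw [← Matrix.exists_mulVec_eq_zero_iff]
  refine ⟨x - y, sub_ne_zero.mpr hne, ?_⟩
  rw [Matrix.mulVec_sub, h, sub_self]

/-- Range of `mulVecLin`, as a submodule of `ℤ^D`. -/
def Rng {D : ℕ} (A : Matrix (Fin D) (Fin D) ℤ) : Submodule ℤ (Fin D → ℤ) :=
  LinearMap.range A.mulVecLin

lemma mem_Rng {D : ℕ} {A : Matrix (Fin D) (Fin D) ℤ} {v : Fin D → ℤ} :
    v ∈ Rng A ↔ ∃ x, A.mulVec x = v := by
  simp [Rng, LinearMap.mem_range, Matrix.mulVecLin_apply]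

lemma leftDvd_of_range_le {D : ℕ} {C A : Matrix (Fin D) (Fin D) ℤ}
    (h : Rng A ≤ Rng C) : LeftDvd C A := by
  classical
  have hcol : ∀ j, ∃ x, C.mulVec x = A.mulVec (Pi.single j 1) := by
    intro j
    exact mem_Rng.mp (h (mem_Rng.mpr ⟨Pi.single j 1, rfl⟩))
  choose x hx using hcol
  refine ⟨Matrix.of fun k j => x j k, ?_⟩
  ext i j
  have := congrFun (hx j) i
  simp only [Matrix.mulVec, dotProduct] at this
  simp only [Matrix.mul_apply, Matrix.of_apply]
  rw [this]
  simp [Pi.single_apply]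

lemma range_le_of_leftDvd {D : ℕ} {C A : Matrix (Fin D) (Fin D) ℤ}
    (h : LeftDvd C A) : Rng A ≤ Rng C := by
  obtain ⟨X, rfl⟩ := h
  intro v hv
  obtain ⟨x, hx⟩ := mem_Rng.mp hv
  exact mem_Rng.mpr ⟨X.mulVec x, by rw [← hx, ← Matrix.mulVec_mulVec]⟩

lemma sup_range_eq_top {D : ℕ} {A B : Matrix (Fin D) (Fin D) ℤ} (hA : A.det ≠ 0)
    (h : ∀ G, IsGcld G A B → IsUnit G.det) : Rng A ⊔ Rng B = ⊤ := by
  classical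
  set S := Rng A ⊔ Rng B with hS
  haveI : Module.Finite ℤ S := inferInstance
  haveI : Module.Free ℤ S := inferInstance
  let b := Module.Free.chooseBasis ℤ S
  have hAinj : Function.Injective A.mulVecLin := by
    intro x y hxy
    by_contra hne
    apply hA
    rw [← Matrix.exists_mulVec_eq_zero_iff]
    exact ⟨x - y, sub_ne_zero.mpr hne, by
      simpa [Matrix.mulVecLin_apply, Matrix.mulVec_sub, sub_eq_zero] using hxy⟩
  have hrk : Module.finrank ℤ S = D := by
    have h1 : Module.finrank ℤ S ≤ D := by
      have := Submodule.finrank_le S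
      simpa using this
    have h2 : D ≤ Module.finrank ℤ S := by
      have hle : Rng A ≤ S := le_sup_left
      have := Submodule.finrank_mono (s := Rng A) (t := S) hle
      have hr : Module.finrank ℤ (Rng A) = D := by
        rw [Rng, LinearMap.finrank_range_of_inj hAinj]
        simp
      omega
    omega
  have hcard : Fintype.card (Module.Free.ChooseBasisIndex ℤ S) = D := by
    rw [← Module.finrank_eq_card_chooseBasisIndex, hrk]
  let e : Fin D ≃ Module.Free.ChooseBasisIndex ℤ S :=
    (Fintype.equivFinOfCardEq hcard).symm
  let G : Matrix (Fin D) (Fin D) ℤ := Matrix.of fun i j => ((b (e j)) : Fin D → ℤ) i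
  have hGmul : ∀ nv : Fin D → ℤ, G.mulVec nv = ((∑ j, nv j • b (e j) : S) : Fin D → ℤ) := by
    intro nv
    funext i
    simp only [Matrix.mulVec, dotProduct, Submodule.coe_sum,
      Finset.sum_apply, SetLike.val_smul, Pi.smul_apply, smul_eq_mul, G, Matrix.of_apply]
    exact Finset.sum_congr rfl fun j _ => mul_comm _ _
  have hRG : Rng G = S := by
    ext v
    constructor
    · intro hv
      obtain ⟨x, hx⟩ := mem_Rng.mp hv
      rw [← hx, hGmul]
      exact ((∑ j, x j • b (e j) : S)).2
    · intro hv
      refine mem_Rng.mpr ⟨fun j => b.repr ⟨v, hv⟩ (e j), ?_⟩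
      rw [hGmul]
      have : (∑ j, b.repr ⟨v, hv⟩ (e j) • b (e j) : S) = ⟨v, hv⟩ := by
        rw [Equiv.sum_comp e (fun k => b.repr ⟨v, hv⟩ k • b k)]
        exact b.sum_repr ⟨v, hv⟩
      rw [this]
  have hGdet : G.det ≠ 0 := by
    intro h0
    obtain ⟨v, hv0, hv⟩ := Matrix.exists_mulVec_eq_zero_iff.mpr h0
    have : (∑ j, v j • b (e j) : S) = 0 := by
      have := (hGmul v).symm.trans hv
      exact Subtype.ext (by simpa using this)
    have hli : ∀ j, v j = 0 := by
      have hli' := b.linearIndependent.comp e e.injective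
      exact fun j => Fintype.linearIndependent_iff.mp hli' v this j
    exact hv0 (funext hli)
  have hgcld : IsGcld G A B :=
    ⟨hGdet, leftDvd_of_range_le (hRG ▸ (le_sup_left : Rng A ≤ S)),
      leftDvd_of_range_le (hRG ▸ (le_sup_right : Rng B ≤ S)), fun C _ hCA hCB => by
        apply leftDvd_of_range_le
        rw [hRG]
        exact sup_le (range_le_of_leftDvd hCA) (range_le_of_leftDvd hCB)⟩
  have hunit : IsUnit G.det := h G hgcld
  have hGU : IsUnit G := (Matrix.isUnit_iff_isUnit_det G).mpr hunit
  obtain ⟨u, hu⟩ := hGU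
  have htop : Rng G = ⊤ := by
    rw [eq_top_iff]
    intro v _
    refine mem_Rng.mpr ⟨(↑u⁻¹ : Matrix (Fin D) (Fin D) ℤ).mulVec v, ?_⟩
    rw [Matrix.mulVec_mulVec, ← hu, Units.mul_inv, Matrix.one_mulVec]
  rw [← hRG, htop]

lemma cancel_left {D : ℕ} {A B : Matrix (Fin D) (Fin D) ℤ}
    (hcomm : A * B = B * A) (hsup : Rng A ⊔ Rng B = ⊤) :
    ∀ δ : Fin D → ℤ, A.mulVec δ ∈ Rng B → δ ∈ Rng B := by
  have hmap : Rng B ≤ Submodule.comap A.mulVecLin (Rng B) := by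
    intro x hx
    obtain ⟨y, hy⟩ := mem_Rng.mp hx
    refine Submodule.mem_comap.mpr (mem_Rng.mpr ⟨A.mulVec y, ?_⟩)
    rw [Matrix.mulVecLin_apply, ← hy, Matrix.mulVec_mulVec, Matrix.mulVec_mulVec, hcomm]
  let f := Submodule.mapQ (Rng B) (Rng B) A.mulVecLin hmap
  have hsurj : Function.Surjective f := by
    intro q
    obtain ⟨v, rfl⟩ := Submodule.Quotient.mk_surjective _ q
    have hv : v ∈ Rng A ⊔ Rng B := hsup ▸ Submodule.mem_top
    obtain ⟨a, ha, w, hw, hsum⟩ := Submodule.mem_sup.mp hv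
    obtain ⟨u, hu⟩ := mem_Rng.mp ha
    refine ⟨Submodule.Quotient.mk u, ?_⟩
    have : f (Submodule.Quotient.mk u) = Submodule.Quotient.mk (A.mulVec u) := by
      simp [f, Submodule.mapQ_apply, Matrix.mulVecLin_apply]
    rw [this, hu]
    rw [← hsum]
    refine (Submodule.Quotient.eq _).mpr ?_
    simpa using (Rng B).neg_mem hw
  have hinj : Function.Injective f :=
    IsNoetherian.injective_of_surjective_endomorphism f hsurj
  intro δ hδ
  have h1 : f (Submodule.Quotient.mk δ) = 0 := by
    have : f (Submodule.Quotient.mk δ) = Submodule.Quotient.mk (A.mulVec δ) := by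
      simp [f, Submodule.mapQ_apply, Matrix.mulVecLin_apply]
    rw [this, Submodule.Quotient.mk_eq_zero]
    exact hδ
  have h0 : f 0 = 0 := map_zero f
  exact (Submodule.Quotient.mk_eq_zero _).mp (hinj (h1.trans h0.symm))

lemma mem_Rng_listProd {D : ℕ} (l : List (Matrix (Fin D) (Fin D) ℤ))
    (hp : l.Pairwise (fun A B => A * B = B * A ∧ Rng A ⊔ Rng B = ⊤))
    : ∀ δ : Fin D → ℤ, (∀ B ∈ l, δ ∈ Rng B) → δ ∈ Rng l.prod := by
  induction l with
  | nil => exact fun δ _ => mem_Rng.mpr ⟨δ, by simp⟩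
  | cons A t ih =>
    intro δ h
    obtain ⟨δ', hδ'⟩ := mem_Rng.mp (h A List.mem_cons_self)
    have hδ't : ∀ B ∈ t, δ' ∈ Rng B := by
      intro B hB
      have hR := (List.pairwise_cons.mp hp).1 B hB
      exact cancel_left hR.1 hR.2 δ' (hδ' ▸ h B (List.mem_cons_of_mem A hB))
    obtain ⟨w, hw⟩ := mem_Rng.mp (ih (List.pairwise_cons.mp hp).2 δ' hδ't)
    refine mem_Rng.mpr ⟨w, ?_⟩
    rw [List.prod_cons, ← Matrix.mulVec_mulVec, hw, hδ']

lemma Rng_mul_unit {D : ℕ} {P U : Matrix (Fin D) (Fin D) ℤ} (hU : IsUnit U.det) :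
    Rng (P * U) = Rng P := by
  obtain ⟨u, hu⟩ := (Matrix.isUnit_iff_isUnit_det U).mpr hU
  apply le_antisymm
  · intro v hv
    obtain ⟨x, hx⟩ := mem_Rng.mp hv
    exact mem_Rng.mpr ⟨U.mulVec x, by rw [← hx, Matrix.mulVec_mulVec]⟩
  · intro v hv
    obtain ⟨x, hx⟩ := mem_Rng.mp hv
    refine mem_Rng.mpr ⟨(↑u⁻¹ : Matrix (Fin D) (Fin D) ℤ).mulVec x, ?_⟩
    rw [Matrix.mulVec_mulVec, Matrix.mul_assoc, ← hu, Units.mul_inv, Matrix.mul_one, hx]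

lemma rmat_det {D : ℕ} (A : Matrix (Fin D) (Fin D) ℤ) : (rmat A).det = (A.det : ℝ) :=
  (RingHom.map_det (Int.castRingHom ℝ) A).symm

lemma rmat_mulVec_injective {D : ℕ} {A : Matrix (Fin D) (Fin D) ℤ} (hA : A.det ≠ 0) :
    Function.Injective (rmat A).mulVec := by
  intro x y h
  by_contra hne
  have hdet : (rmat A).det ≠ 0 := by
    rw [rmat_det]; exact_mod_cast hA
  apply hdet
  rw [← Matrix.exists_mulVec_eq_zero_iff]
  exact ⟨x - y, sub_ne_zero.mpr hne, by rw [Matrix.mulVec_sub, h, sub_self]⟩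

lemma NN_eq_of_diff {D : ℕ} {W : Matrix (Fin D) (Fin D) ℤ} (hdet : W.det ≠ 0)
    {k k' : Fin D → ℤ} (hk : k ∈ NN (rmat W)) (hk' : k' ∈ NN (rmat W))
    (hd : k - k' ∈ Rng W) : k = k' := by
  obtain ⟨x, hx, hkx⟩ := hk
  obtain ⟨y, hy, hky⟩ := hk'
  obtain ⟨c, hc⟩ := mem_Rng.mp hd
  have hcast : (fun i => ((k i - k' i : ℤ) : ℝ)) = (rmat W).mulVec (fun i => (c i : ℝ)) := by
    funext i
    have := congrFun hc.symm i
    simp only [Pi.sub_apply] at this ⊢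
    rw [this]
    simp [rmat, Matrix.mulVec, dotProduct]
  have hxy : x - y = fun i => (c i : ℝ) := by
    apply rmat_mulVec_injective hdet
    rw [Matrix.mulVec_sub, ← hkx, ← hky, ← hcast]
    funext i
    push_cast
    simp
  have hc0 : ∀ i, c i = 0 := by
    intro i
    have h1 : (c i : ℝ) = x i - y i := by rw [← congrFun hxy i]; simp
    have h2 : (c i : ℝ) < 1 := by rw [h1]; linarith [(hx i).1, (hx i).2, (hy i).1, (hy i).2]
    have h3 : (-1 : ℝ) < c i := by rw [h1]; linarith [(hx i).1, (hx i).2, (hy i).1, (hy i).2]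
    have : c i < 1 ∧ -1 < c i := ⟨by exact_mod_cast h2, by exact_mod_cast h3⟩
    omega
  have hxeqy : x = y := by
    funext i
    have := congrFun hxy i
    simp [hc0 i] at this
    linarith [this]
  funext i
  have : ((k i : ℝ)) = (k' i : ℝ) := by
    rw [congrFun hkx i, congrFun hky i, hxeqy]
  exact_mod_cast this

lemma lamMin_le {D : ℕ} {A : Matrix (Fin D) (Fin D) ℝ} {w : EuclideanSpace ℝ (Fin D)}
    (hw : w ∈ latt A) (hne : w ≠ 0) : lamMin A ≤ ‖w‖ := by
  apply csInf_le
  · exact ⟨0, fun r ⟨v, _, _, hv⟩ => hv ▸ norm_nonneg v⟩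
  · exact ⟨w, hw, hne, rfl⟩

lemma det_list_prod' {D : ℕ} (l : List (Matrix (Fin D) (Fin D) ℤ)) :
    l.prod.det = (l.map Matrix.det).prod := by
  induction l with
  | nil => simp
  | cons A t ih => simp [Matrix.det_mul, ih]

lemma ne_zero_of_mem_drop {L : ℕ} [NeZero L] {j : Fin L}
    (hj : j ∈ (List.finRange L).drop 1) : j ≠ 0 := by
  obtain ⟨i, hi, hgi⟩ := List.mem_iff_getElem.mp hj
  rw [List.getElem_drop] at hgi
  rw [List.getElem_finRange] at hgi
  intro h0
  rw [h0] at hgi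
  have h2 := congrArg (Fin.val) hgi
  simp [Fin.val_cast_of_lt] at h2

/-- Proposition 2, sufficiency, special moduli Mᵢ = MΓᵢ.
Index 0 plays the role of index 1 in the paper, and
W = Γ₂Γ₃⋯Γ_L·U₁ is the ordered product of the remaining Γ's times U₁. -/
theorem robust_mdcrt_special_moduli {D L : ℕ} [NeZero L] (hD : 0 < D) (hL : 2 ≤ L)
    (M : Matrix (Fin D) (Fin D) ℤ) (hM : M.det ≠ 0)
    (Γ : Fin L → Matrix (Fin D) (Fin D) ℤ) (hΓdet : ∀ i, (Γ i).det ≠ 0)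
    (hcomm : ∀ i j, Γ i * Γ j = Γ j * Γ i)
    (hcop : ∀ i j, i ≠ j → ∀ Gm : Matrix (Fin D) (Fin D) ℤ,
      IsGcld Gm (Γ i) (Γ j) → IsUnit Gm.det)
    (U₁ : Matrix (Fin D) (Fin D) ℤ) (hU₁ : IsUnit U₁.det)
    (W : Matrix (Fin D) (Fin D) ℤ)
    (hW : W = (((List.finRange L).drop 1).map Γ).prod * U₁)
    (m : Fin D → ℤ)
    (n : Fin L → Fin D → ℤ) (hn : ∀ i, n i = fold (M * Γ i) m)
    (r : Fin L → Fin D → ℤ) (hr : ∀ i, r i = m - (M * Γ i).mulVec (n i))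
    (hrange : fold (M * Γ 0) m ∈ NN (rmat W))
    (Δr rt : Fin L → Fin D → ℤ) (hrt : ∀ i, rt i = r i + Δr i)
    (τ : ℝ) (hτ : ∀ i, ‖rvec (Δr i)‖ ≤ τ)
    (hbound : τ < lamMin (rmat M) / 4) :
    -- (a) r_i − r₁ is the unique minimizer of ‖v − (r̃_i − r̃₁)‖₂ over v ∈ L(M)
    (∀ i, i ≠ 0 → rvec (r i - r 0) ∈ latt (rmat M) ∧
      ∀ v ∈ latt (rmat M), v ≠ rvec (r i - r 0) →
        ‖rvec (r i - r 0) - (rvec (rt i) - rvec (rt 0))‖ <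
          ‖v - (rvec (rt i) - rvec (rt 0))‖) ∧
    -- (b) n₁ is the unique ν ∈ N(Γ₂⋯Γ_LU₁) with MΓ₁ν − (r_i − r₁) ∈ L(MΓ_i),
    --     and M_i n_i = MΓ₁n₁ − (r_i − r₁)
    (n 0 ∈ NN (rmat W) ∧
      (∀ i, i ≠ 0 → (M * Γ 0).mulVec (n 0) - (r i - r 0) ∈ lattZ (M * Γ i)) ∧
      (∀ ν : Fin D → ℤ, ν ∈ NN (rmat W) →
        (∀ i, i ≠ 0 → (M * Γ 0).mulVec ν - (r i - r 0) ∈ lattZ (M * Γ i)) →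
        ν = n 0) ∧
      (∀ i, i ≠ 0 →
        (M * Γ i).mulVec (n i) = (M * Γ 0).mulVec (n 0) - (r i - r 0))) ∧
    -- (c) the reconstruction m̃ = (1/L) ∑ᵢ (M_i n_i + r̃_i) satisfies ‖m̃ − m‖₂ ≤ τ
    ‖(L : ℝ)⁻¹ • (∑ i, rvec ((M * Γ i).mulVec (n i) + rt i)) - rvec m‖ ≤ τ := by
  classical
  have hτ0 : 0 ≤ τ := le_trans (norm_nonneg _) (hτ 0)
  have hlam : 4 * τ < lamMin (rmat M) := by linarith
  have key : ∀ i, (M * Γ i).mulVec (n i) = m - r i := by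
    intro i; rw [hr i]; abel
  have hb4 : ∀ i, i ≠ (0 : Fin L) →
      (M * Γ i).mulVec (n i) = (M * Γ 0).mulVec (n 0) - (r i - r 0) := by
    intro i _
    rw [key i, key 0]; abel
  have hri : ∀ i, r i - r 0 = M.mulVec ((Γ 0).mulVec (n 0) - (Γ i).mulVec (n i)) := by
    intro i
    rw [Matrix.mulVec_sub, Matrix.mulVec_mulVec, Matrix.mulVec_mulVec, hr i, hr 0]
    abel
  -- part (a)
  have parta : ∀ i, i ≠ (0 : Fin L) → rvec (r i - r 0) ∈ latt (rmat M) ∧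
      ∀ v ∈ latt (rmat M), v ≠ rvec (r i - r 0) →
        ‖rvec (r i - r 0) - (rvec (rt i) - rvec (rt 0))‖ <
          ‖v - (rvec (rt i) - rvec (rt 0))‖ := by
    intro i _
    have hmem : rvec (r i - r 0) ∈ latt (rmat M) := by
      rw [hri i]
      exact ⟨(Γ 0).mulVec (n 0) - (Γ i).mulVec (n i), rvec_mulVec _ _⟩
    refine ⟨hmem, ?_⟩
    intro v hv hvne
    have htgt : rvec (r i - r 0) - (rvec (rt i) - rvec (rt 0)) =
        rvec (Δr 0) - rvec (Δr i) := by
      rw [hrt i, hrt 0, rvec_add, rvec_add, rvec_sub]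
      abel
    have h2τ : ‖rvec (r i - r 0) - (rvec (rt i) - rvec (rt 0))‖ ≤ 2 * τ := by
      rw [htgt]
      calc ‖rvec (Δr 0) - rvec (Δr i)‖ ≤ ‖rvec (Δr 0)‖ + ‖rvec (Δr i)‖ := norm_sub_le _ _
        _ ≤ 2 * τ := by linarith [hτ 0, hτ i]
    have hsub : v - rvec (r i - r 0) ∈ latt (rmat M) := by
      obtain ⟨a, ha⟩ := hv
      rw [hri i]
      refine ⟨a - ((Γ 0).mulVec (n 0) - (Γ i).mulVec (n i)), ?_⟩
      rw [WithLp.ofLp_sub, ha, rvec_mulVec, ← Matrix.mulVec_sub]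
      congr 1
      funext j
      simp [rvec]
    have hlb : lamMin (rmat M) ≤ ‖v - rvec (r i - r 0)‖ :=
      lamMin_le hsub (sub_ne_zero.mpr hvne)
    have tri : ‖v - rvec (r i - r 0)‖ ≤ ‖v - (rvec (rt i) - rvec (rt 0))‖ +
        ‖rvec (r i - r 0) - (rvec (rt i) - rvec (rt 0))‖ := by
      have heq : v - rvec (r i - r 0) = (v - (rvec (rt i) - rvec (rt 0))) -
          (rvec (r i - r 0) - (rvec (rt i) - rvec (rt 0))) := by abel
      rw [heq]
      exact norm_sub_le _ _
    linarith
  refine ⟨parta, ?_, ?_⟩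
  · -- part (b)
    have hb1 : n 0 ∈ NN (rmat W) := by rw [hn 0]; exact hrange
    have hsup : ∀ i j : Fin L, i ≠ j → Rng (Γ i) ⊔ Rng (Γ j) = ⊤ := fun i j hij =>
      sup_range_eq_top (hΓdet i) (fun G hG => hcop i j hij G hG)
    refine ⟨hb1, fun i hi => ⟨n i, (hb4 i hi).symm⟩, ?_, hb4⟩
    intro ν hν hall
    have hδ : ∀ i, i ≠ (0 : Fin L) → (ν - n 0) ∈ Rng (Γ i) := by
      intro i hi
      obtain ⟨x, hx⟩ := hall i hi
      have heq : M.mulVec ((Γ 0).mulVec (ν - n 0)) = M.mulVec ((Γ i).mulVec (x - n i)) := by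
        simp only [Matrix.mulVec_sub, Matrix.mulVec_mulVec]
        have h1 : (M * Γ 0).mulVec ν = (M * Γ i).mulVec x + (r i - r 0) := by
          rw [← hx]; abel
        have h2 : (M * Γ 0).mulVec (n 0) = (M * Γ i).mulVec (n i) + (r i - r 0) := by
          rw [hb4 i hi]; abel
        rw [h1, h2]
        abel
      have hmid := mulVec_int_injective hM heq
      exact cancel_left (hcomm 0 i) (hsup 0 i (fun h => hi h.symm)) (ν - n 0)
        (hmid ▸ mem_Rng.mpr ⟨x - n i, rfl⟩)
    set lst := ((List.finRange L).drop 1).map Γ with hlst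
    have hnd : ((List.finRange L).drop 1).Pairwise (· ≠ ·) :=
      (List.nodup_finRange L).sublist (List.drop_sublist 1 _)
    have hpair : lst.Pairwise (fun A B => A * B = B * A ∧ Rng A ⊔ Rng B = ⊤) :=
      hnd.map Γ (fun a b hab => ⟨hcomm a b, hsup a b hab⟩)
    have hmemall : ∀ B ∈ lst, (ν - n 0) ∈ Rng B := by
      intro B hB
      obtain ⟨j, hj, rfl⟩ := List.mem_map.mp hB
      exact hδ j (ne_zero_of_mem_drop hj)
    have hP : (ν - n 0) ∈ Rng lst.prod := mem_Rng_listProd lst hpair _ hmemall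
    have hWmem : (ν - n 0) ∈ Rng W := by
      rw [hW, Rng_mul_unit hU₁]
      exact hP
    have hdetP : lst.prod.det ≠ 0 := by
      rw [det_list_prod']
      apply List.prod_ne_zero
      intro h0
      obtain ⟨dd, hdd, hdd0⟩ := List.mem_map.mp h0
      obtain ⟨j, _, rfl⟩ := List.mem_map.mp hdd
      exact hΓdet j (by simpa using hdd0)
    have hdetW : W.det ≠ 0 := by
      rw [hW, Matrix.det_mul]
      exact mul_ne_zero hdetP hU₁.ne_zero
    exact NN_eq_of_diff hdetW hν hb1 hWmem
  · -- part (c)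
    have hL0 : (L : ℝ) ≠ 0 := by
      have : (0 : ℕ) < L := by omega
      positivity
    have hterm : ∀ i, rvec ((M * Γ i).mulVec (n i) + rt i) = rvec m + rvec (Δr i) := by
      intro i
      have : (M * Γ i).mulVec (n i) + rt i = m + Δr i := by
        rw [hrt i, key i]; abel
      rw [this, rvec_add]
    have hsum2 : (∑ i, rvec ((M * Γ i).mulVec (n i) + rt i)) =
        (L : ℝ) • rvec m + ∑ i, rvec (Δr i) := by
      rw [Finset.sum_congr rfl (fun i _ => hterm i), Finset.sum_add_distrib,
        Finset.sum_const, Finset.card_univ, Fintype.card_fin]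
      congr 1
      rw [← Nat.cast_smul_eq_nsmul ℝ]
    have hmain : (L : ℝ)⁻¹ • (∑ i, rvec ((M * Γ i).mulVec (n i) + rt i)) - rvec m =
        (L : ℝ)⁻¹ • ∑ i, rvec (Δr i) := by
      rw [hsum2, smul_add, smul_smul, inv_mul_cancel₀ hL0, one_smul]
      abel
    rw [hmain]
    rw [norm_smul]
    have hnorm : ‖∑ i, rvec (Δr i)‖ ≤ (L : ℝ) * τ := by
      calc ‖∑ i, rvec (Δr i)‖ ≤ ∑ i, ‖rvec (Δr i)‖ := norm_sum_le _ _
        _ ≤ ∑ _i : Fin L, τ := Finset.sum_le_sum (fun i _ => hτ i)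
        _ = (L : ℝ) * τ := by
          rw [Finset.sum_const, Finset.card_univ, Fintype.card_fin, nsmul_eq_mul]
    have : ‖(L : ℝ)⁻¹‖ = (L : ℝ)⁻¹ := by
      rw [Real.norm_eq_abs, abs_of_nonneg]
      positivity
    rw [this]
    calc (L : ℝ)⁻¹ * ‖∑ i, rvec (Δr i)‖ ≤ (L : ℝ)⁻¹ * ((L : ℝ) * τ) := by
          apply mul_le_mul_of_nonneg_left hnorm
          positivity
      _ = τ := by field_simp
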